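/- Let ϖ be a primary prime in ℤ[i], k ∈ ℤ[i], and suppose ϖ^h ‖ k (i.e., ϖ^h ∣ k and ϖ^{h+1} ∤ k). If l ≤ h and l is odd, then g₂(k, ϖ^l) = 0; if l ≤ h and l is even, then g₂(k, ϖ^l) = φ(ϖ^l), the cardinality of the unit group of ℤ[i]/(ϖ^l). -/

import Mathlib

noncomputable section

open Complex
open scoped Classical

/-- The norm `N(n)` of a Gaussian integer, as a natural number. -/
def GInorm (n : GaussianInt) : ℕ := n.norm.natAbs

/-- The Gaussian integer `1 + i`. -/
def onePlusI : GaussianInt := ⟨1, 1⟩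

/-- `n` is primary: `n ≡ 1 (mod (1+i)³)`. -/
def GIPrimary (n : GaussianInt) : Prop := onePlusI ^ 3 ∣ n - 1

/-- The quadratic residue symbol `(x/ϖ)` at a prime `ϖ`: the unique `ζ ∈ {1, −1}` with
`ϖ ∣ x^((N(ϖ)−1)/2) − ζ` when `(x, ϖ) = 1`, and `0` otherwise. -/
def primQuadSym (ϖ x : GaussianInt) : GaussianInt :=
  if h : ∃ ζ ∈ ({1, -1} : Set GaussianInt), ϖ ∣ x ^ ((GInorm ϖ - 1) / 2) - ζ
  then h.choose else 0

/-- The quadratic residue symbol `(x/n)`, extended multiplicatively in `n` over the prime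
factorization of `n`. -/
def quadSym (n x : GaussianInt) : GaussianInt :=
  (Multiset.map (fun ϖ => primQuadSym ϖ x) (UniqueFactorizationMonoid.factors n)).prod

/-- The additive character `ẽ_i(z) = exp(2πi(z/(2i) − z̄/(2i)))`. -/
def eI (z : ℂ) : ℂ :=
  Complex.exp (2 * Real.pi * Complex.I *
    (z / (2 * Complex.I) - (starRingEnd ℂ) z / (2 * Complex.I)))

/-- A representative in `ℤ[i]` of a residue class modulo `n`. -/
def rep {n : GaussianInt} (x : GaussianInt ⧸ Ideal.span {n}) : GaussianInt :=
  Function.surjInv Ideal.Quotient.mk_surjective x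

/-- The quadratic Gauss sum `g₂(r, n) = Σ_{x mod n} (x/n) ẽ_i(rx/n)`. -/
def g2 (r n : GaussianInt) : ℂ :=
  ∑ᶠ x : GaussianInt ⧸ Ideal.span {n},
    GaussianInt.toComplex (quadSym n (rep x)) *
      eI (GaussianInt.toComplex (r * rep x) / GaussianInt.toComplex n)

/-- `φ(n) = #(ℤ[i]/(n))ˣ`. -/
def phiGI (n : GaussianInt) : ℕ := Nat.card ((GaussianInt ⧸ Ideal.span {n})ˣ)

/-!
Since `ϖ ^ l ∣ k`, every value of the additive character in `g₂(k, ϖ ^ l)` is `1`, and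
`(x / ϖ ^ l) = (x / ϖ) ^ l`. Because `ϖ` is primary, `ϖ ∤ 2`, so the residue field `ℤ[i]/(ϖ)` has
odd characteristic, and Euler's criterion identifies `(x / ϖ)` with its quadratic character `χ`.
Reduction `ℤ[i]/(ϖ ^ l) → ℤ[i]/(ϖ)` is a local homomorphism, so `χ` pulls back to a nontrivial
quadratic multiplicative character `ψ` of `ℤ[i]/(ϖ ^ l)` (for `l ≥ 1`), and `g₂(k, ϖ ^ l) = ∑ₓ ψ(x) ^ l`.
For odd `l` this is the sum of the nontrivial character `ψ`, hence `0`; for even `l`, `ψ ^ l` is the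
trivial character, whose sum counts the units of `ℤ[i]/(ϖ ^ l)`.
-/

namespace Zsqrtd

variable {d : ℤ}

def basis (d : ℤ) : Module.Basis (Fin 2) ℤ (ℤ√d) :=
  .ofEquivFun
    { toFun := fun z => ![z.re, z.im]
      invFun := fun v => ⟨v 0, v 1⟩
      left_inv := fun _ => rfl
      right_inv := fun v => by ext i; fin_cases i <;> rfl
      map_add' := fun _ _ => by ext i; fin_cases i <;> rfl
      map_smul' := fun c z => by ext i; fin_cases i <;> simp [zsmul_eq_mul] }

theorem basis_repr_apply (z : ℤ√d) : (basis d).repr z = ![z.re, z.im] := rfl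

instance : Module.Free ℤ (ℤ√d) := .of_basis (basis d)

instance : Module.Finite ℤ (ℤ√d) := .of_basis (basis d)

theorem algebraNorm_eq_norm (z : ℤ√d) : Algebra.norm ℤ z = z.norm := by
  have h0 : basis d 0 = 1 := by ext <;> simp [basis, Module.Basis.coe_ofEquivFun] <;> rfl
  have h1 : basis d 1 = sqrtd := by ext <;> simp [basis, Module.Basis.coe_ofEquivFun] <;> rfl
  rw [Algebra.norm_eq_matrix_det (basis d), Matrix.det_fin_two]
  simp [Algebra.leftMulMatrix_eq_repr_mul, basis_repr_apply, h0, h1, norm_def]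

end Zsqrtd

theorem GaussianInt.natCard_quotient_span_singleton (z : GaussianInt) :
    Nat.card (GaussianInt ⧸ Ideal.span {z}) = GInorm z := by
  have := Ideal.absNorm_span_singleton z
  rwa [Ideal.absNorm_apply, Submodule.cardQuot_apply, Zsqrtd.algebraNorm_eq_norm] at this

theorem GIPrimary.not_dvd_two {ϖ : GaussianInt} (hϖ : Prime ϖ) (hprim : GIPrimary ϖ) :
    ¬ ϖ ∣ 2 := by
  intro h2
  have hsq : onePlusI ^ 2 = 2 * ⟨0, 1⟩ := by decide
  have h1 : ϖ ∣ onePlusI := hϖ.dvd_of_dvd_pow (h2.trans ⟨_, hsq⟩)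
  have hsub : ϖ ∣ ϖ - 1 := h1.trans ((dvd_pow_self _ three_ne_zero).trans hprim)
  exact hϖ.not_isUnit (isUnit_of_dvd_one ((dvd_sub_right (dvd_refl ϖ)).mp hsub))

theorem Associated.GInorm_eq {ϖ q : GaussianInt} (h : Associated ϖ q) : GInorm ϖ = GInorm q := by
  obtain ⟨u, rfl⟩ := h
  rw [GInorm, GInorm, Zsqrtd.norm_mul, Int.natAbs_mul, Zsqrtd.norm_eq_one_iff.mpr u.isUnit,
    mul_one]

theorem Associated.primQuadSym_eq {ϖ q : GaussianInt} (h : Associated ϖ q) (a : GaussianInt) :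
    primQuadSym ϖ a = primQuadSym q a := by
  simp only [primQuadSym, h.GInorm_eq, h.dvd_iff_dvd_left]

open UniqueFactorizationMonoid in
theorem quadSym_prime_pow {ϖ : GaussianInt} (hϖ : Prime ϖ) (l : ℕ) (a : GaussianInt) :
    quadSym (ϖ ^ l) a = primQuadSym ϖ a ^ l := by
  have hfac : ∀ q ∈ factors (ϖ ^ l), Associated q ϖ := fun q hq =>
    have hq' := prime_of_factor q hq
    hq'.associated_of_dvd hϖ (hq'.dvd_of_dvd_pow (dvd_of_mem_factors hq))
  obtain ⟨b, -, hb⟩ := factors_eq_singleton_of_irreducible hϖ.irreducible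
  have hcard : (factors (ϖ ^ l)).card = l := by
    simpa [hb] using Multiset.card_eq_card_of_rel (factors_pow (x := ϖ) l)
  rw [quadSym, Multiset.map_congr rfl fun q hq => (hfac q hq).primQuadSym_eq a,
    Multiset.map_const', Multiset.prod_replicate, hcard]

namespace MulChar

variable {R S R' F : Type*} [CommMonoid R] [CommMonoid S] [CommMonoidWithZero R']
  [FunLike F R S] [MonoidHomClass F R S]

def comap (χ : MulChar S R') (f : F) [IsLocalHom f] : MulChar R R' where
  toFun x := χ (f x)
  map_one' := by simp
  map_mul' x y := by simp
  map_nonunit' _ hx := χ.map_nonunit (mt (IsUnit.of_map f _) hx)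

@[simp]
theorem comap_apply (χ : MulChar S R') (f : F) [IsLocalHom f] (x : R) :
    χ.comap f x = χ (f x) := rfl

theorem comap_ne_one {χ : MulChar S R'} (hχ : χ ≠ 1) {f : F} [IsLocalHom f]
    (hf : Function.Surjective f) : χ.comap f ≠ 1 := by
  obtain ⟨a, ha⟩ := ne_one_iff.mp hχ
  obtain ⟨x, hx⟩ := hf a
  have hxu : IsUnit x := IsUnit.of_map f x (hx ▸ a.isUnit)
  exact ne_one_iff.mpr ⟨hxu.unit, by rwa [IsUnit.unit_spec, comap_apply, hx]⟩

theorem IsQuadratic.comap {R' : Type*} [CommRing R'] {χ : MulChar S R'} (hχ : χ.IsQuadratic)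
    (f : F) [IsLocalHom f] : (χ.comap f).IsQuadratic := fun x => hχ (f x)

end MulChar

theorem eI_eq_exp_im (z : ℂ) : eI z = Complex.exp (2 * Real.pi * Complex.I * z.im) := by
  rw [eI, ← sub_div, Complex.sub_conj]
  congr 1
  field_simp
  push_cast
  ring

theorem eI_toComplex (g : GaussianInt) : eI (GaussianInt.toComplex g) = 1 := by
  obtain ⟨x, y⟩ := g
  rw [eI_eq_exp_im, GaussianInt.im_toComplex, mul_comm]
  exact Complex.exp_int_mul_two_pi_mul_I y

theorem g2_of_dvd {k n : GaussianInt} (hn : n ≠ 0) (hk : n ∣ k) :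
    g2 k n = ∑ᶠ x : GaussianInt ⧸ Ideal.span {n}, GaussianInt.toComplex (quadSym n (rep x)) := by
  obtain ⟨c, rfl⟩ := hk
  have hn' : GaussianInt.toComplex n ≠ 0 := GaussianInt.toComplex_eq_zero.not.mpr hn
  refine finsum_congr fun x => ?_
  rw [mul_assoc, map_mul, mul_div_cancel_left₀ _ hn', eI_toComplex, mul_one]

theorem g2_one (k : GaussianInt) : g2 k 1 = 1 := by
  have : Subsingleton (GaussianInt ⧸ Ideal.span {(1 : GaussianInt)}) :=
    Ideal.Quotient.subsingleton_iff.mpr Ideal.span_singleton_one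
  have := uniqueOfSubsingleton (0 : GaussianInt ⧸ Ideal.span {(1 : GaussianInt)})
  rw [g2_of_dvd one_ne_zero (one_dvd k), finsum_unique]
  simp [quadSym]

theorem phiGI_one : phiGI 1 = 1 := by
  rw [phiGI, Ideal.span_singleton_one]
  exact Nat.card_unique

namespace GaussianInt

open Ideal

instance (z : GaussianInt) [NeZero z] : Fintype (GaussianInt ⧸ span {z}) :=
  have : Finite (GaussianInt ⧸ span {z}) := Nat.finite_of_card_ne_zero <| by
    rw [natCard_quotient_span_singleton, GInorm, Int.natAbs_ne_zero]
    exact (Zsqrtd.norm_eq_zero_iff (by norm_num) z).not.mpr (NeZero.ne z)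
  Fintype.ofFinite _

theorem ringChar_quotient_ne_two {ϖ : GaussianInt} (h2 : ¬ ϖ ∣ 2) :
    ringChar (GaussianInt ⧸ span {ϖ}) ≠ 2 := by
  intro hchar
  have : ((2 : ℕ) : GaussianInt ⧸ span {ϖ}) = 0 := hchar ▸ ringChar.Nat.cast_ringChar
  rw [← map_natCast (Ideal.Quotient.mk (span {ϖ})), Ideal.Quotient.eq_zero_iff_mem,
    mem_span_singleton] at this
  exact h2 (by exact_mod_cast this)

theorem span_pow_le_span {ϖ : GaussianInt} {l : ℕ} [NeZero l] : span {ϖ ^ l} ≤ span {ϖ} :=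
  span_singleton_le_span_singleton.mpr (dvd_pow_self ϖ (NeZero.ne l))

variable {ϖ : GaussianInt} [hϖ : Fact (Prime ϖ)]

instance : NeZero ϖ := ⟨hϖ.out.ne_zero⟩

instance : (span {ϖ}).IsMaximal := PrincipalIdealRing.isMaximal_of_irreducible hϖ.out.irreducible

instance : Field (GaussianInt ⧸ span {ϖ}) := Ideal.Quotient.field _

theorem primQuadSym_eq_quadraticChar (h2 : ¬ ϖ ∣ 2) (a : GaussianInt) :
    primQuadSym ϖ a = quadraticChar (GaussianInt ⧸ span {ϖ}) (Ideal.Quotient.mk _ a) := by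
  have hF := ringChar_quotient_ne_two h2
  have hm : (GInorm ϖ - 1) / 2 = Fintype.card (GaussianInt ⧸ span {ϖ}) / 2 := by
    have hodd := FiniteField.even_card_iff_char_two.not.mp hF
    rw [← natCard_quotient_span_singleton, Nat.card_eq_fintype_card]
    omega
  set c := quadraticChar _ (Ideal.Quotient.mk (span {ϖ}) a)
  have hc : c ∈ ({0, 1, -1} : Set ℤ) := quadraticChar_isQuadratic _ _
  -- Euler's criterion: `c` reduces to `(mk a) ^ ((N ϖ - 1) / 2)`, and `0, 1, -1` stay distinct
  -- modulo `ϖ`, so `c` is the only candidate for the `ζ` in the definition of `primQuadSym`.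
  have key : ∀ ζ ∈ ({0, 1, -1} : Set ℤ), ϖ ∣ a ^ ((GInorm ϖ - 1) / 2) - ζ ↔ ζ = c := by
    intro ζ hζ
    rw [← (Int.cast_injOn_of_ringChar_ne_two hF).eq_iff hζ hc,
      quadraticChar_eq_pow_of_char_ne_two' hF, ← hm, ← mem_span_singleton (y := ϖ),
      ← Ideal.Quotient.eq_zero_iff_mem, map_sub, map_pow, map_intCast, sub_eq_zero, eq_comm]
  unfold primQuadSym
  split_ifs with hex
  · obtain ⟨hmem | hmem, hdvd⟩ := hex.choose_spec <;> rw [hmem] at hdvd ⊢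
    · exact_mod_cast (key 1 (by simp)).mp (by exact_mod_cast hdvd)
    · exact_mod_cast (key (-1) (by simp)).mp (by exact_mod_cast hdvd)
  · obtain hc0 | hc1 | hc1 : c = 0 ∨ c = 1 ∨ c = -1 := hc
    · rw [hc0, Int.cast_zero]
    all_goals exact absurd ⟨c, by simp [hc1], (key c (by simp [hc1])).mpr rfl⟩ hex

variable {l : ℕ} [NeZero l]

instance : IsLocalHom (Ideal.Quotient.factor (span_pow_le_span (ϖ := ϖ) (l := l))) where
  map_nonunit x hx := by
    obtain ⟨a, rfl⟩ := Ideal.Quotient.mk_surjective x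
    rw [Ideal.Quotient.factor_mk] at hx
    rw [← span_singleton_pow]
    exact (Ideal.Quotient.isUnit_mk_pow_iff_isUnit_mk _ (NeZero.ne l)).mpr hx

variable (ϖ l) in
def quadCharModPow : MulChar (GaussianInt ⧸ span {ϖ ^ l}) ℤ :=
  (quadraticChar (GaussianInt ⧸ span {ϖ})).comap (Ideal.Quotient.factor span_pow_le_span)

theorem primQuadSym_rep (h2 : ¬ ϖ ∣ 2) (x : GaussianInt ⧸ span {ϖ ^ l}) :
    primQuadSym ϖ (rep x) = quadCharModPow ϖ l x := by
  conv_rhs => rw [← Function.surjInv_eq Ideal.Quotient.mk_surjective x]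
  rw [primQuadSym_eq_quadraticChar h2, quadCharModPow, MulChar.comap_apply,
    Ideal.Quotient.factor_mk]
  rfl

theorem quadCharModPow_isQuadratic : (quadCharModPow ϖ l).IsQuadratic :=
  (quadraticChar_isQuadratic (GaussianInt ⧸ span {ϖ})).comap _

theorem quadCharModPow_ne_one (h2 : ¬ ϖ ∣ 2) : quadCharModPow ϖ l ≠ 1 :=
  MulChar.comap_ne_one (quadraticChar_ne_one (ringChar_quotient_ne_two h2))
    (Ideal.Quotient.factor_surjective _)

theorem g2_prime_pow_of_dvd (h2 : ¬ ϖ ∣ 2) {k : GaussianInt} (hk : ϖ ^ l ∣ k) :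
    g2 k (ϖ ^ l) = ∑ x, ((quadCharModPow ϖ l ^ l) x : ℂ) := by
  rw [g2_of_dvd (pow_ne_zero _ hϖ.out.ne_zero) hk, finsum_eq_sum_of_fintype]
  refine Finset.sum_congr rfl fun x _ => ?_
  rw [quadSym_prime_pow hϖ.out, primQuadSym_rep h2, MulChar.pow_apply' _ (NeZero.ne l)]
  simp

end GaussianInt

theorem gauss_sum_prime_power_small_general (ϖ k : GaussianInt) (h l : ℕ) (hϖ : Prime ϖ)
    (hprim : GIPrimary ϖ) (hdvd : ϖ ^ h ∣ k) (hl : l ≤ h) :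
    (Odd l → g2 k (ϖ ^ l) = 0) ∧ (Even l → g2 k (ϖ ^ l) = (phiGI (ϖ ^ l) : ℂ)) := by
  have h2 := hprim.not_dvd_two hϖ
  have := Fact.mk hϖ
  obtain rfl | hl0 := Nat.eq_zero_or_pos l
  · exact ⟨fun hodd => absurd hodd Nat.not_odd_zero, fun _ => by simp [g2_one, phiGI_one]⟩
  have : NeZero l := ⟨hl0.ne'⟩
  have hψ := GaussianInt.quadCharModPow_isQuadratic (ϖ := ϖ) (l := l)
  rw [GaussianInt.g2_prime_pow_of_dvd h2 ((pow_dvd_pow ϖ hl).trans hdvd), ← Int.cast_sum]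
  refine ⟨fun hodd => ?_, fun heven => ?_⟩
  · rw [hψ.pow_odd hodd, MulChar.sum_eq_zero_of_ne_one (GaussianInt.quadCharModPow_ne_one h2),
      Int.cast_zero]
  · rw [hψ.pow_even heven, MulChar.sum_one_eq_card_units, phiGI, Nat.card_eq_fintype_card]
    norm_cast

/-- For a primary prime `ϖ` with `ϖ^h ‖ k` and `l ≤ h`: if `l` is odd then
`g₂(k, ϖ^l) = 0`, and if `l` is even then `g₂(k, ϖ^l) = φ(ϖ^l)`. -/
theorem gauss_sum_prime_power_small (ϖ k : GaussianInt) (h l : ℕ) (hϖ : Prime ϖ)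
    (hprim : GIPrimary ϖ) (hdvd : ϖ ^ h ∣ k) (hndvd : ¬ ϖ ^ (h + 1) ∣ k) (hl : l ≤ h) :
    (Odd l → g2 k (ϖ ^ l) = 0) ∧ (Even l → g2 k (ϖ ^ l) = (phiGI (ϖ ^ l) : ℂ)) :=
  gauss_sum_prime_power_small_general ϖ k h l hϖ hprim hdvd hl
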